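/- arXiv:math-ph/0508068 — 4 statements merged into one kernel-verified Lean document; each statement's English description precedes it below -/
import Mathlib

section
/- With H_s the quantum top matrix of the previous context, tr(H_s²) = (1/240)g₁² s(s+1)(2s+1)(3s²+3s-1) + (1/60)g₂ s(s+1)(2s-1)(2s+1)(2s+3), where g₁ = 4(a₁+a₂+a₃) and g₂ = -4(a₁a₂ + a₂a₃ + a₁a₃). -/
/-- Quantum Euler top matrix in the spin-`s` representation:
indices `i : Fin (2*s+1)` correspond to `j = i - s ∈ {-s,...,s}`. -/
noncomputable def Hmat (s : ℕ) (a1 a2 a3 : ℝ) :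
    Matrix (Fin (2 * s + 1)) (Fin (2 * s + 1)) ℝ :=
  Matrix.of fun i i' =>
    let j : ℝ := (i : ℕ) - (s : ℝ)
    let j' : ℝ := (i' : ℕ) - (s : ℝ)
    if i = i' then (a1 + a2) / 2 * ((s : ℝ) * ((s : ℝ) + 1) - j ^ 2) + a3 * j ^ 2
    else if (i' : ℕ) = (i : ℕ) + 2 then
      (a1 - a2) / 4 *
        Real.sqrt (((s : ℝ) - j) * ((s : ℝ) - j - 1) * ((s : ℝ) + j + 1) * ((s : ℝ) + j + 2))
    else if (i : ℕ) = (i' : ℕ) + 2 then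
      (a1 - a2) / 4 *
        Real.sqrt (((s : ℝ) - j') * ((s : ℝ) - j' - 1) * ((s : ℝ) + j' + 1) * ((s : ℝ) + j' + 2))
    else 0

/-- squared diagonal entry -/
noncomputable def Aent (s : ℕ) (a1 a2 a3 : ℝ) (i : ℕ) : ℝ :=
  ((a1 + a2) / 2 * ((s : ℝ) * ((s : ℝ) + 1) - ((i : ℝ) - (s : ℝ)) ^ 2)
      + a3 * ((i : ℝ) - (s : ℝ)) ^ 2) ^ 2

/-- squared off-diagonal entry -/
noncomputable def Qent (s : ℕ) (a1 a2 : ℝ) (i : ℕ) : ℝ :=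
  ((a1 - a2) / 4) ^ 2 *
    ((2 * (s : ℝ) - (i : ℝ)) * (2 * (s : ℝ) - (i : ℝ) - 1) * ((i : ℝ) + 1) * ((i : ℝ) + 2))

lemma quartic_sum (c0 c1 c2 c3 c4 : ℝ) (n : ℕ) :
    ∑ i ∈ Finset.range n,
        (c0 + c1 * (i : ℝ) + c2 * (i : ℝ) ^ 2 + c3 * (i : ℝ) ^ 3 + c4 * (i : ℝ) ^ 4) =
      c0 * n + c1 * ((n : ℝ) * ((n : ℝ) - 1) / 2) +
        c2 * ((n : ℝ) * ((n : ℝ) - 1) * (2 * (n : ℝ) - 1) / 6) +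
        c3 * ((n : ℝ) * ((n : ℝ) - 1) / 2) ^ 2 +
        c4 * ((n : ℝ) * ((n : ℝ) - 1) * (2 * (n : ℝ) - 1) *
          (3 * (n : ℝ) ^ 2 - 3 * (n : ℝ) - 1) / 30) := by
  induction n with
  | zero => simp
  | succ n ih =>
    rw [Finset.sum_range_succ, ih]
    push_cast
    ring

lemma trunc (n : ℕ) (f : ℕ → ℝ) :
    ∑ i ∈ Finset.range n, (if i + 2 < n then f i else 0)
      = ∑ i ∈ Finset.range (n - 2), f i := by
  rw [← Finset.sum_subset (Finset.range_subset_range.2 (Nat.sub_le n 2))]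
  · refine Finset.sum_congr rfl fun i hi => ?_
    rw [if_pos]
    simp only [Finset.mem_range] at hi
    omega
  · intro i hi hni
    rw [if_neg]
    simp only [Finset.mem_range] at hi hni
    omega

lemma prod_eq (s : ℕ) (a1 a2 a3 : ℝ) (i k : Fin (2 * s + 1)) :
    Hmat s a1 a2 a3 i k * Hmat s a1 a2 a3 k i =
      (if (k : ℕ) = (i : ℕ) then Aent s a1 a2 a3 (i : ℕ) else 0)
      + (if (k : ℕ) = (i : ℕ) + 2 then Qent s a1 a2 (i : ℕ) else 0)
      + (if (i : ℕ) = (k : ℕ) + 2 then Qent s a1 a2 (k : ℕ) else 0) := by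
  have hik := i.isLt
  have hkl := k.isLt
  simp only [Hmat, Matrix.of_apply]
  by_cases h1 : i = k
  · subst h1
    simp only [if_pos (rfl : i = i), if_pos (rfl : (i : ℕ) = (i : ℕ)),
      if_neg (show ¬(i : ℕ) = (i : ℕ) + 2 by omega), if_true, ite_true, add_zero]
    unfold Aent
    ring
  · have h1s : ¬ k = i := fun h => h1 h.symm
    have h1' : ¬ (k : ℕ) = (i : ℕ) := fun h => h1 (Fin.ext h.symm)
    by_cases h2 : (k : ℕ) = (i : ℕ) + 2
    · have hni : ¬ (i : ℕ) = (k : ℕ) + 2 := by omega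
      simp only [if_neg h1, if_neg h1s, if_neg h1', if_pos h2, if_neg hni,
        add_zero, zero_add]
      have hi2 : ((i : ℕ) : ℝ) + 2 ≤ 2 * (s : ℝ) := by
        have : (i : ℕ) + 2 ≤ 2 * s := by omega
        exact_mod_cast this
      have hnn : (0 : ℝ) ≤ ((i : ℕ) : ℝ) := Nat.cast_nonneg _
      have hX : 0 ≤ ((s : ℝ) - (((i : ℕ) : ℝ) - (s : ℝ))) *
          ((s : ℝ) - (((i : ℕ) : ℝ) - (s : ℝ)) - 1) *
          ((s : ℝ) + (((i : ℕ) : ℝ) - (s : ℝ)) + 1) *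
          ((s : ℝ) + (((i : ℕ) : ℝ) - (s : ℝ)) + 2) := by
        have f1 : (0:ℝ) ≤ (s : ℝ) - (((i : ℕ) : ℝ) - (s : ℝ)) := by linarith
        have f2 : (0:ℝ) ≤ (s : ℝ) - (((i : ℕ) : ℝ) - (s : ℝ)) - 1 := by linarith
        have f3 : (0:ℝ) ≤ (s : ℝ) + (((i : ℕ) : ℝ) - (s : ℝ)) + 1 := by linarith
        have f4 : (0:ℝ) ≤ (s : ℝ) + (((i : ℕ) : ℝ) - (s : ℝ)) + 2 := by linarith
        exact mul_nonneg (mul_nonneg (mul_nonneg f1 f2) f3) f4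
      have hxx := Real.mul_self_sqrt hX
      unfold Qent
      linear_combination ((a1 - a2) / 4) ^ 2 * hxx
    · by_cases h3 : (i : ℕ) = (k : ℕ) + 2
      · simp only [if_neg h1, if_neg h1s, if_neg h1', if_neg h2, if_pos h3,
          add_zero, zero_add]
        have hk2 : ((k : ℕ) : ℝ) + 2 ≤ 2 * (s : ℝ) := by
          have : (k : ℕ) + 2 ≤ 2 * s := by omega
          exact_mod_cast this
        have hnn : (0 : ℝ) ≤ ((k : ℕ) : ℝ) := Nat.cast_nonneg _
        have hX : 0 ≤ ((s : ℝ) - (((k : ℕ) : ℝ) - (s : ℝ))) *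
            ((s : ℝ) - (((k : ℕ) : ℝ) - (s : ℝ)) - 1) *
            ((s : ℝ) + (((k : ℕ) : ℝ) - (s : ℝ)) + 1) *
            ((s : ℝ) + (((k : ℕ) : ℝ) - (s : ℝ)) + 2) := by
          have f1 : (0:ℝ) ≤ (s : ℝ) - (((k : ℕ) : ℝ) - (s : ℝ)) := by linarith
          have f2 : (0:ℝ) ≤ (s : ℝ) - (((k : ℕ) : ℝ) - (s : ℝ)) - 1 := by linarith
          have f3 : (0:ℝ) ≤ (s : ℝ) + (((k : ℕ) : ℝ) - (s : ℝ)) + 1 := by linarith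
          have f4 : (0:ℝ) ≤ (s : ℝ) + (((k : ℕ) : ℝ) - (s : ℝ)) + 2 := by linarith
          exact mul_nonneg (mul_nonneg (mul_nonneg f1 f2) f3) f4
        have hxx := Real.mul_self_sqrt hX
        unfold Qent
        linear_combination ((a1 - a2) / 4) ^ 2 * hxx
      · simp only [if_neg h1, if_neg h1s, if_neg h1', if_neg h2, if_neg h3,
          add_zero, zero_add, mul_zero, zero_mul]

lemma key (s : ℕ) (a1 a2 a3 : ℝ) :
    Matrix.trace ((Hmat s a1 a2 a3) ^ 2) =
      (∑ i ∈ Finset.range (2 * s + 1), Aent s a1 a2 a3 i)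
        + 2 * ∑ i ∈ Finset.range (2 * s + 1 - 2), Qent s a1 a2 i := by
  rw [sq, Matrix.trace]
  simp only [Matrix.diag_apply, Matrix.mul_apply]
  have step1 : ∀ i : Fin (2 * s + 1),
      ∑ k : Fin (2 * s + 1), Hmat s a1 a2 a3 i k * Hmat s a1 a2 a3 k i
        = ∑ k ∈ Finset.range (2 * s + 1),
            ((if k = (i : ℕ) then Aent s a1 a2 a3 (i : ℕ) else 0)
              + (if k = (i : ℕ) + 2 then Qent s a1 a2 (i : ℕ) else 0)
              + (if (i : ℕ) = k + 2 then Qent s a1 a2 k else 0)) := by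
    intro i
    rw [← Fin.sum_univ_eq_sum_range]
    exact Finset.sum_congr rfl fun k _ => prod_eq s a1 a2 a3 i k
  calc (∑ i : Fin (2 * s + 1), ∑ k : Fin (2 * s + 1),
          Hmat s a1 a2 a3 i k * Hmat s a1 a2 a3 k i)
      = ∑ i ∈ Finset.range (2 * s + 1), ∑ k ∈ Finset.range (2 * s + 1),
          ((if k = i then Aent s a1 a2 a3 i else 0)
            + (if k = i + 2 then Qent s a1 a2 i else 0)
            + (if i = k + 2 then Qent s a1 a2 k else 0)) := by
        rw [← Fin.sum_univ_eq_sum_range]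
        exact Finset.sum_congr rfl fun i _ => step1 i
    _ = (∑ i ∈ Finset.range (2 * s + 1), Aent s a1 a2 a3 i)
          + 2 * ∑ i ∈ Finset.range (2 * s + 1 - 2), Qent s a1 a2 i := by
        simp only [Finset.sum_add_distrib]
        have e1 : ∑ i ∈ Finset.range (2 * s + 1), ∑ k ∈ Finset.range (2 * s + 1),
            (if k = i then Aent s a1 a2 a3 i else 0)
              = ∑ i ∈ Finset.range (2 * s + 1), Aent s a1 a2 a3 i := by
          refine Finset.sum_congr rfl fun i hi => ?_
          rw [Finset.sum_ite_eq' (Finset.range (2 * s + 1)) i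
            (fun _ => Aent s a1 a2 a3 i), if_pos hi]
        have e2 : ∑ i ∈ Finset.range (2 * s + 1), ∑ k ∈ Finset.range (2 * s + 1),
            (if k = i + 2 then Qent s a1 a2 i else 0)
              = ∑ i ∈ Finset.range (2 * s + 1 - 2), Qent s a1 a2 i := by
          rw [← trunc (2 * s + 1) (fun i => Qent s a1 a2 i)]
          refine Finset.sum_congr rfl fun i _ => ?_
          rw [Finset.sum_ite_eq' (Finset.range (2 * s + 1)) (i + 2)
            (fun _ => Qent s a1 a2 i)]
          simp [Finset.mem_range]
        have e3 : ∑ i ∈ Finset.range (2 * s + 1), ∑ k ∈ Finset.range (2 * s + 1),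
            (if i = k + 2 then Qent s a1 a2 k else 0)
              = ∑ i ∈ Finset.range (2 * s + 1 - 2), Qent s a1 a2 i := by
          rw [Finset.sum_comm, ← trunc (2 * s + 1) (fun i => Qent s a1 a2 i)]
          refine Finset.sum_congr rfl fun k _ => ?_
          rw [Finset.sum_ite_eq' (Finset.range (2 * s + 1)) (k + 2)
            (fun _ => Qent s a1 a2 k)]
          simp [Finset.mem_range]
        rw [e1, e2, e3]
        ring

/-- Trace of the square of the quantum top matrix. -/
theorem trace_Hmat_sq (s : ℕ) (a1 a2 a3 : ℝ) :
    Matrix.trace ((Hmat s a1 a2 a3) ^ 2) =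
      1 / 240 * (4 * (a1 + a2 + a3)) ^ 2 * (s : ℝ) * ((s : ℝ) + 1) * (2 * (s : ℝ) + 1) *
        (3 * (s : ℝ) ^ 2 + 3 * (s : ℝ) - 1) +
      1 / 60 * (-4 * (a1 * a2 + a2 * a3 + a1 * a3)) * (s : ℝ) * ((s : ℝ) + 1) *
        (2 * (s : ℝ) - 1) * (2 * (s : ℝ) + 1) * (2 * (s : ℝ) + 3) := by
  rw [key]
  set sR : ℝ := (s : ℝ) with hsR
  have hA : (∑ i ∈ Finset.range (2 * s + 1), Aent s a1 a2 a3 i)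
      = ∑ i ∈ Finset.range (2 * s + 1),
        (((1/4 : ℝ) * sR^2 * a2^2 + (1/2 : ℝ) * sR^2 * a1 * a2 + (1/4 : ℝ) * sR^2 * a1^2 + (1 : ℝ) * sR^3 * a2 * a3 + (1 : ℝ) * sR^3 * a1 * a3 + (1 : ℝ) * sR^4 * a3^2)
          + ((-2 : ℝ) * sR^2 * a2 * a3 + (1 : ℝ) * sR^2 * a2^2 + (-2 : ℝ) * sR^2 * a1 * a3 + (2 : ℝ) * sR^2 * a1 * a2 + (1 : ℝ) * sR^2 * a1^2 + (-4 : ℝ) * sR^3 * a3^2 + (2 : ℝ) * sR^3 * a2 * a3 + (2 : ℝ) * sR^3 * a1 * a3) * (i : ℝ)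
          + ((1 : ℝ) * sR * a2 * a3 + (-1/2 : ℝ) * sR * a2^2 + (1 : ℝ) * sR * a1 * a3 + (-1 : ℝ) * sR * a1 * a2 + (-1/2 : ℝ) * sR * a1^2 + (6 : ℝ) * sR^2 * a3^2 + (-5 : ℝ) * sR^2 * a2 * a3 + (1 : ℝ) * sR^2 * a2^2 + (-5 : ℝ) * sR^2 * a1 * a3 + (2 : ℝ) * sR^2 * a1 * a2 + (1 : ℝ) * sR^2 * a1^2) * (i : ℝ)^2
          + ((-4 : ℝ) * sR * a3^2 + (4 : ℝ) * sR * a2 * a3 + (-1 : ℝ) * sR * a2^2 + (4 : ℝ) * sR * a1 * a3 + (-2 : ℝ) * sR * a1 * a2 + (-1 : ℝ) * sR * a1^2) * (i : ℝ)^3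
          + ((1 : ℝ) * a3^2 + (-1 : ℝ) * a2 * a3 + (1/4 : ℝ) * a2^2 + (-1 : ℝ) * a1 * a3 + (1/2 : ℝ) * a1 * a2 + (1/4 : ℝ) * a1^2) * (i : ℝ)^4) :=
    Finset.sum_congr rfl fun i _ => by unfold Aent; rw [hsR]; ring
  have hQ : (∑ i ∈ Finset.range (2 * s + 1 - 2), Qent s a1 a2 i)
      = ∑ i ∈ Finset.range (2 * s + 1 - 2),
        (((-1/4 : ℝ) * sR * a2^2 + (1/2 : ℝ) * sR * a1 * a2 + (-1/4 : ℝ) * sR * a1^2 + (1/2 : ℝ) * sR^2 * a2^2 + (-1 : ℝ) * sR^2 * a1 * a2 + (1/2 : ℝ) * sR^2 * a1^2)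
          + ((1/8 : ℝ) * a2^2 + (-1/4 : ℝ) * a1 * a2 + (1/8 : ℝ) * a1^2 + (-7/8 : ℝ) * sR * a2^2 + (7/4 : ℝ) * sR * a1 * a2 + (-7/8 : ℝ) * sR * a1^2 + (3/4 : ℝ) * sR^2 * a2^2 + (-3/2 : ℝ) * sR^2 * a1 * a2 + (3/4 : ℝ) * sR^2 * a1^2) * (i : ℝ)
          + ((5/16 : ℝ) * a2^2 + (-5/8 : ℝ) * a1 * a2 + (5/16 : ℝ) * a1^2 + (-7/8 : ℝ) * sR * a2^2 + (7/4 : ℝ) * sR * a1 * a2 + (-7/8 : ℝ) * sR * a1^2 + (1/4 : ℝ) * sR^2 * a2^2 + (-1/2 : ℝ) * sR^2 * a1 * a2 + (1/4 : ℝ) * sR^2 * a1^2) * (i : ℝ)^2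
          + ((1/4 : ℝ) * a2^2 + (-1/2 : ℝ) * a1 * a2 + (1/4 : ℝ) * a1^2 + (-1/4 : ℝ) * sR * a2^2 + (1/2 : ℝ) * sR * a1 * a2 + (-1/4 : ℝ) * sR * a1^2) * (i : ℝ)^3
          + ((1/16 : ℝ) * a2^2 + (-1/8 : ℝ) * a1 * a2 + (1/16 : ℝ) * a1^2) * (i : ℝ)^4) :=
    Finset.sum_congr rfl fun i _ => by unfold Qent; rw [hsR]; ring
  rw [hA, hQ, quartic_sum, quartic_sum]
  rcases s with _ | k
  · norm_num [hsR]
  · have hn : 2 * (k + 1) + 1 - 2 = 2 * k + 1 := by omega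
    rw [hn, hsR]
    push_cast
    ring
end

section
/- For every natural number k ≥ 1, the trace tr(H_sᵏ) is divisible by s(s+1)(2s+1) as a polynomial in s; more concretely, there is a polynomial P_k in s (with coefficients polynomial in a₁,a₂,a₃) of degree 2k-2 such that tr(H_sᵏ) = s(s+1)(2s+1)·P_k(s) for all nonnegative integers s. -/
/-!
Conjugating `H_s` by the diagonal matrix with entries `√(C(2s, i))` removes the square roots:
the result is a band matrix (bands `-2, 0, 2`) whose entries are polynomials of total degree `≤ 2`
in `s` and the row index `i`. Expanding its `k`-th power as a sum over walks, the diagonal entries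
are values `W_k(s, i)` of one polynomial of total degree `≤ 2k`, so by Faulhaber's formula
`tr(H_s^k) = ∑_{i ≤ 2s} W_k(s, i)` is a polynomial `F(s)` of degree `≤ 2k + 1`. It vanishes at
`s = 0` since `H_0 = 0`, at `s = -1/2` where the sum is empty, and at `s = -1`, where the sum
reduces to `-W_k(-1, -1)`: at `s = -1` every band entry leading into row `-1` vanishes.
-/

noncomputable section

open Polynomial in
theorem Polynomial.exists_eq_prod_X_sub_C_mul {K : Type*} [Field K] {p : K[X]} {S : Finset K}
    (h : ∀ a ∈ S, p.IsRoot a) :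
    ∃ q, p = (∏ a ∈ S, (X - C a)) * q ∧ q.natDegree = p.natDegree - S.card := by
  have hmonic : (∏ a ∈ S, (X - C a)).Monic := monic_prod_X_sub_C _ _
  have hdvd : ∏ a ∈ S, (X - C a) ∣ p :=
    Finset.prod_dvd_of_coprime ((pairwise_coprime_X_sub_C Function.injective_id).set_pairwise _)
      fun a ha => dvd_iff_isRoot.mpr (h a ha)
  refine ⟨p /ₘ ∏ a ∈ S, (X - C a), ?_, ?_⟩
  · have h := modByMonic_add_div p (∏ a ∈ S, (X - C a))
    rwa [(modByMonic_eq_zero_iff_dvd hmonic).mpr hdvd, zero_add, eq_comm] at h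
  · rw [natDegree_divByMonic _ hmonic, natDegree_finsetProd_X_sub_C_eq_card]

theorem Matrix.trace_pow_eq_of_semiconjBy {n R : Type*} [Fintype n] [DecidableEq n] [CommSemiring R]
    {E M N : Matrix n n R} (hE : IsUnit E) (h : SemiconjBy E M N) (k : ℕ) :
    (M ^ k).trace = (N ^ k).trace := by
  obtain ⟨u, rfl⟩ := hE
  have hk : M ^ k = (↑u⁻¹ : Matrix n n R) * N ^ k * u := by
    rw [mul_assoc, ← (h.pow_right k).eq, ← mul_assoc, Units.inv_mul, one_mul]
  rw [hk, Matrix.trace_units_conj']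

theorem Real.sqrt_mul_mul_sqrt_of_mul_eq {u v a b : ℝ} (hu : 0 ≤ u) (hv : 0 ≤ v)
    (h : v * b = u * a) : √(u * v) * √b = √a * u := by
  rw [← Real.sqrt_mul (mul_nonneg hu hv), mul_assoc, h, ← mul_assoc, Real.sqrt_mul
    (mul_self_nonneg u), Real.sqrt_mul_self hu, mul_comm]

theorem Nat.cast_choose_add_two_mul {R : Type*} [CommRing R] {N i : ℕ} (h : i + 2 ≤ N) :
    ((i : R) + 1) * (i + 2) * N.choose (i + 2) = (N - i) * (N - i - 1) * N.choose i := by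
  have h₁ := congrArg (Nat.cast : ℕ → R) (Nat.choose_succ_right_eq N i)
  have h₂ := congrArg (Nat.cast : ℕ → R) (Nat.choose_succ_right_eq N (i + 1))
  push_cast [Nat.cast_sub (show i ≤ N by omega), Nat.cast_sub (show i + 1 ≤ N by omega)]
    at h₁ h₂
  linear_combination ((i : R) + 1) * h₂ + (N - i - 1) * h₁

section Faulhaber

open Polynomial

def faulhaber (m : ℕ) : ℚ[X] :=
  C ((m : ℚ) + 1)⁻¹ * (Polynomial.bernoulli (m + 1) - C (_root_.bernoulli (m + 1)))

theorem faulhaber_eval_natCast (m n : ℕ) :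
    (faulhaber m).eval (n : ℚ) = ∑ j ∈ Finset.range n, (j : ℚ) ^ m := by
  rw [faulhaber, eval_mul, eval_sub, eval_C, eval_C, ← sum_range_pow_eq_bernoulli_sub]
  field_simp

theorem faulhaber_eval_neg_one (m : ℕ) : (faulhaber m).eval (-1) = -(-1) ^ m := by
  have h := bernoulli_eval_one_add (m + 1) (-1)
  rw [add_neg_cancel, bernoulli_eval_zero, Nat.add_sub_cancel] at h
  rw [faulhaber, eval_mul, eval_sub, eval_C, eval_C, h]
  push_cast
  field_simp
  ring

theorem natDegree_faulhaber_le (m : ℕ) : (faulhaber m).natDegree ≤ m + 1 := by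
  refine natDegree_C_mul_le _ _ |>.trans <| natDegree_sub_le_iff_left (by simp) |>.mpr ?_
  rw [bernoulli_def]
  exact natDegree_sum_le_of_forall_le _ _ fun _ hi =>
    (natDegree_monomial_le _).trans (Nat.lt_succ_iff.mp (Finset.mem_range.mp hi))

variable {K : Type*} [Field K] [CharZero K]

/-- `x ↦ ∑_{i < q(x)} p(x, i)`, made a polynomial in `x` by Faulhaber's formula. -/
def sumBelow (q : K[X]) (p : MvPolynomial (Fin 2) K) : K[X] :=
  ∑ m ∈ p.support, C (p.coeff m) * X ^ m 0 * ((faulhaber (m 1)).map (algebraMap ℚ K)).comp q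

theorem sumBelow_eval (q : K[X]) (p : MvPolynomial (Fin 2) K) (x : K) :
    (sumBelow q p).eval x = ∑ m ∈ p.support,
      p.coeff m * x ^ m 0 * ((faulhaber (m 1)).map (algebraMap ℚ K)).eval (q.eval x) := by
  simp [sumBelow, eval_finsetSum]

theorem sumBelow_eval_of_eval_eq_natCast {q : K[X]} {x : K} {n : ℕ} (h : q.eval x = n)
    (p : MvPolynomial (Fin 2) K) :
    (sumBelow q p).eval x = ∑ i ∈ Finset.range n, MvPolynomial.eval ![x, (i : K)] p := by
  simp_rw [sumBelow_eval, h, MvPolynomial.eval_eq', Fin.prod_univ_two]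
  rw [Finset.sum_comm]
  refine Finset.sum_congr rfl fun m _ => ?_
  have := eval_map_apply (algebraMap ℚ K) (p := faulhaber (m 1)) (n : ℚ)
  simp only [eq_ratCast, Rat.cast_natCast, faulhaber_eval_natCast] at this
  simp [this, Finset.mul_sum, mul_assoc]

theorem sumBelow_eval_of_eval_eq_neg_one {q : K[X]} {x : K} (h : q.eval x = -1)
    (p : MvPolynomial (Fin 2) K) :
    (sumBelow q p).eval x = -MvPolynomial.eval ![x, -1] p := by
  simp_rw [sumBelow_eval, h, MvPolynomial.eval_eq', Fin.prod_univ_two, ← Finset.sum_neg_distrib]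
  refine Finset.sum_congr rfl fun m _ => ?_
  have := eval_map_apply (algebraMap ℚ K) (p := faulhaber (m 1)) (-1)
  simp only [eq_ratCast, Rat.cast_neg, Rat.cast_one, faulhaber_eval_neg_one] at this
  simp [this]
  ring

theorem natDegree_sumBelow_le {q : K[X]} (hq : q.natDegree ≤ 1) (p : MvPolynomial (Fin 2) K) :
    (sumBelow q p).natDegree ≤ p.totalDegree + 1 := by
  refine natDegree_sum_le_of_forall_le _ _ fun m hm => ?_
  have hm' := MvPolynomial.le_totalDegree hm
  rw [Finsupp.sum_fintype _ _ (fun _ => rfl), Fin.sum_univ_two] at hm'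
  have hcomp : (((faulhaber (m 1)).map (algebraMap ℚ K)).comp q).natDegree ≤ m 1 + 1 :=
    natDegree_comp_le.trans <| (Nat.mul_le_mul (natDegree_map_le.trans (natDegree_faulhaber_le _))
      hq).trans_eq (mul_one _)
  refine natDegree_mul_le.trans (add_le_add (natDegree_C_mul_le _ _) hcomp |>.trans ?_)
  rw [natDegree_X_pow]
  omega

end Faulhaber

section BandWalk

variable {R : Type*} [CommSemiring R] (B : Finset ℤ) (f : ℤ → ℤ → R)

/-- Sum over the `k`-step walks from `r` to `r + d` with steps in `B` of the product of the step
weights, a step by `b` from `t` weighing `f b t`. -/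
def bandWalk : ℕ → ℤ → ℤ → R
  | 0, d, _ => if d = 0 then 1 else 0
  | k + 1, d, r => ∑ b ∈ B, bandWalk k (d - b) r * f b (r + (d - b))

variable {B f}

theorem bandWalk_eq_zero_of_escape {n : ℤ}
    (hf : ∀ b ∈ B, ∀ t ∈ Set.Ico 0 n, t + b ∉ Set.Ico 0 n → f b t = 0) (k : ℕ) :
    ∀ d r, r ∈ Set.Ico 0 n → r + d ∉ Set.Ico 0 n → bandWalk B f k d r = 0 := by
  induction k with
  | zero =>
    intro d r hr hrd
    have hd : d ≠ 0 := by rintro rfl; simp_all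
    simp [bandWalk, hd]
  | succ k ih =>
    intro d r hr hrd
    refine Finset.sum_eq_zero fun b hb => ?_
    by_cases ht : r + (d - b) ∈ Set.Ico 0 n
    · rw [hf b hb _ ht (by rwa [add_assoc, sub_add_cancel]), mul_zero]
    · rw [ih _ _ hr ht, zero_mul]

theorem Matrix.pow_apply_eq_bandWalk {n : ℕ} {M : Matrix (Fin n) (Fin n) R}
    (hM : ∀ i j, M i j = f ((j : ℤ) - i) i) (hB : ∀ b ∉ B, f b = 0)
    (hf : ∀ b ∈ B, ∀ t ∈ Set.Ico 0 (n : ℤ), t + b ∉ Set.Ico 0 (n : ℤ) → f b t = 0)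
    (k : ℕ) (i j : Fin n) : (M ^ k) i j = bandWalk B f k ((j : ℤ) - i) i := by
  induction k generalizing j with
  | zero =>
    simp [bandWalk, Matrix.one_apply, sub_eq_zero, Fin.ext_iff, eq_comm]
  | succ k ih =>
    rw [pow_succ, Matrix.mul_apply, bandWalk]
    simp_rw [ih, hM]
    refine Finset.sum_bij_ne_zero (fun l _ _ => (j : ℤ) - l) ?_ ?_ ?_ ?_
    · intro l _ hl
      by_contra hb
      rw [hB _ hb] at hl
      simp at hl
    · intro l₁ _ _ l₂ _ _ h
      exact Fin.ext (by omega)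
    · intro b _ hb
      have hin : (i : ℤ) + ((j - i) - b) ∈ Set.Ico 0 (n : ℤ) := by
        by_contra hout
        exact hb (by rw [bandWalk_eq_zero_of_escape hf k _ _ (by simp) hout, zero_mul])
      obtain ⟨hin₀, hin₁⟩ := hin
      refine ⟨⟨((j : ℤ) - b).toNat, by omega⟩, Finset.mem_univ _, ?_, by simp; omega⟩
      convert hb using 3 <;> simp <;> omega
    · intro l _ _
      congr 2 <;> ring


theorem map_bandWalk {S : Type*} [CommSemiring S] (φ : R →+* S) {g : ℤ → ℤ → S} {i : ℤ}
    (h : ∀ b e, φ (f b e) = g b (i + e)) (k : ℕ) (d r : ℤ) :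
    φ (bandWalk B f k d r) = bandWalk B g k d (i + r) := by
  induction k generalizing d with
  | zero => simp [bandWalk, apply_ite φ]
  | succ k ih => simp [bandWalk, ih, h, add_assoc]

theorem totalDegree_bandWalk_le {σ : Type*} {f : ℤ → ℤ → MvPolynomial σ R} {m : ℕ}
    (hf : ∀ b ∈ B, ∀ e, (f b e).totalDegree ≤ m) (k : ℕ) (d r : ℤ) :
    (bandWalk B f k d r).totalDegree ≤ m * k := by
  induction k generalizing d with
  | zero => by_cases hd : d = 0 <;> simp [bandWalk, hd]
  | succ k ih =>
    refine (MvPolynomial.totalDegree_finsetSum _ _).trans <| Finset.sup_le fun b hb => ?_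
    refine (MvPolynomial.totalDegree_mul _ _).trans ?_
    have hstep := hf b hb (r + (d - b))
    have hwalk := ih (d - b)
    rw [mul_add_one]
    omega

end BandWalk

section EulerTop

open MvPolynomial

/-- The entry in row `t = i + e`, column `t + b` of `D⁻¹ H_s D`, where `D = diag √(C(2s, t))`,
as a polynomial in `s = X 0` and `i = X 1`. -/
def topBand (a1 a2 a3 : ℝ) (b e : ℤ) : MvPolynomial (Fin 2) ℝ :=
  let s : MvPolynomial (Fin 2) ℝ := X 0
  let t := X 1 + C (e : ℝ)
  if b = 0 then C ((a1 + a2) / 2) * (s * (s + 1) - (t - s) ^ 2) + C a3 * (t - s) ^ 2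
  else if b = 2 then C ((a1 - a2) / 4) * (2 * s - t) * (2 * s - t - 1)
  else if b = -2 then C ((a1 - a2) / 4) * (t - 1) * t
  else 0

variable (a1 a2 a3 : ℝ)

theorem topBand_eq_zero {b : ℤ} (hb : b ∉ ({-2, 0, 2} : Finset ℤ)) :
    topBand a1 a2 a3 b = 0 := by
  simp only [Finset.mem_insert, Finset.mem_singleton, not_or] at hb
  ext1 e
  simp [topBand, hb]

theorem eval_topBand_offset (b e : ℤ) (x y : ℝ) :
    eval ![x, y] (topBand a1 a2 a3 b e) = eval ![x, y + e] (topBand a1 a2 a3 b 0) := by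
  unfold topBand
  split_ifs <;> simp

theorem totalDegree_topBand_le (b e : ℤ) : (topBand a1 a2 a3 b e).totalDegree ≤ 2 := by
  have hmul {p q : MvPolynomial (Fin 2) ℝ} {m n : ℕ} (hp : p.totalDegree ≤ m)
      (hq : q.totalDegree ≤ n) : (p * q).totalDegree ≤ m + n :=
    (totalDegree_mul p q).trans (add_le_add hp hq)
  have hadd {p q : MvPolynomial (Fin 2) ℝ} {n : ℕ} (hp : p.totalDegree ≤ n)
      (hq : q.totalDegree ≤ n) : (p + q).totalDegree ≤ n :=
    (totalDegree_add p q).trans (max_le hp hq)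
  have hsub {p q : MvPolynomial (Fin 2) ℝ} {n : ℕ} (hp : p.totalDegree ≤ n)
      (hq : q.totalDegree ≤ n) : (p - q).totalDegree ≤ n :=
    (totalDegree_sub p q).trans (max_le hp hq)
  have hC (c : ℝ) (n : ℕ) : (C c : MvPolynomial (Fin 2) ℝ).totalDegree ≤ n := by simp
  have hX (i : Fin 2) : (X i : MvPolynomial (Fin 2) ℝ).totalDegree ≤ 1 := (totalDegree_X i).le
  have hT : (X 1 + C (e : ℝ) : MvPolynomial (Fin 2) ℝ).totalDegree ≤ 1 := hadd (hX 1) (hC _ _)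
  have hJ : (X 1 + C (e : ℝ) - X 0 : MvPolynomial (Fin 2) ℝ).totalDegree ≤ 1 := hsub hT (hX 0)
  have hJ2 : ((X 1 + C (e : ℝ) - X 0 : MvPolynomial (Fin 2) ℝ) ^ 2).totalDegree ≤ 2 := by
    rw [sq]
    exact hmul hJ hJ
  have hU : (2 * X 0 - (X 1 + C (e : ℝ)) : MvPolynomial (Fin 2) ℝ).totalDegree ≤ 1 := by
    refine hsub ?_ hT
    rw [← map_ofNat C 2]
    exact (hmul (hC 2 0) (hX 0)).trans_eq (zero_add 1)
  unfold topBand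
  split_ifs
  · exact hadd ((hmul (hC _ 0) (hsub (hmul (hX 0) (hadd (hX 0) (hC _ _))) hJ2)).trans_eq
      (zero_add 2)) ((hmul (hC _ 0) hJ2).trans_eq (zero_add 2))
  · exact (hmul (hmul (hC _ 0) hU) (hsub hU (hC _ _))).trans_eq rfl
  · exact (hmul (hmul (hC _ 0) (hsub hT (hC _ _))) hT).trans_eq rfl
  · simp

theorem eval_topBand_diag (x t : ℝ) : eval ![x, t] (topBand a1 a2 a3 0 0) =
    (a1 + a2) / 2 * (x * (x + 1) - (t - x) ^ 2) + a3 * (t - x) ^ 2 := by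
  simp [topBand]

theorem eval_topBand_up (x t : ℝ) :
    eval ![x, t] (topBand a1 a2 a3 2 0) = (a1 - a2) / 4 * (2 * x - t) * (2 * x - t - 1) := by
  simp [topBand]

theorem eval_topBand_down (x t : ℝ) :
    eval ![x, t] (topBand a1 a2 a3 (-2) 0) = (a1 - a2) / 4 * (t - 1) * t := by
  simp [topBand]

theorem eval_topBand_eq_zero_of_escape (s : ℕ) {b t : ℤ}
    (ht : t ∈ Set.Ico 0 (2 * s + 1 : ℤ)) (hbt : t + b ∉ Set.Ico 0 (2 * s + 1 : ℤ)) :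
    eval ![(s : ℝ), (t : ℝ)] (topBand a1 a2 a3 b 0) = 0 := by
  simp only [Set.mem_Ico, not_and_or, not_le, not_lt] at ht hbt
  by_cases hb : b ∈ ({-2, 0, 2} : Finset ℤ)
  · simp only [Finset.mem_insert, Finset.mem_singleton] at hb
    rcases hb with rfl | rfl | rfl
    · rw [eval_topBand_down]
      obtain rfl | rfl : t = 0 ∨ t = 1 := by omega
      all_goals simp
    · omega
    · rw [eval_topBand_up]
      obtain rfl | rfl : t = 2 * s - 1 ∨ t = 2 * s := by omega
      all_goals simp
  · simp [topBand_eq_zero a1 a2 a3 hb]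

theorem eval_topBand_neg_one (b : ℤ) : eval ![-1, -1] (topBand a1 a2 a3 b (-b)) = 0 := by
  rw [eval_topBand_offset]
  by_cases hb : b ∈ ({-2, 0, 2} : Finset ℤ)
  · simp only [Finset.mem_insert, Finset.mem_singleton] at hb
    rcases hb with rfl | rfl | rfl
    · rw [eval_topBand_down]; norm_num
    · rw [eval_topBand_diag]; norm_num
    · rw [eval_topBand_up]; norm_num
  · simp [topBand_eq_zero a1 a2 a3 hb]

def topMatrix (s : ℕ) : Matrix (Fin (2 * s + 1)) (Fin (2 * s + 1)) ℝ :=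
  Matrix.of fun i j =>
    eval ![(s : ℝ), (((i : ℕ) : ℤ) : ℝ)] (topBand a1 a2 a3 ((j : ℤ) - i) 0)

theorem sqrt_mul_sqrt_choose_add_two {s i : ℕ} (hi : i + 2 ≤ 2 * s) :
    √(((s : ℝ) - (i - s)) * (s - (i - s) - 1) * (s + (i - s) + 1) * (s + (i - s) + 2)) *
      √((2 * s).choose (i + 2)) =
      √((2 * s).choose i) * ((2 * s - i) * (2 * s - i - 1)) := by
  have hi' : (i : ℝ) + 2 ≤ 2 * s := by exact_mod_cast hi
  have hchoose := Nat.cast_choose_add_two_mul (R := ℝ) hi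
  push_cast at hchoose
  rw [show ((s : ℝ) - (i - s)) * (s - (i - s) - 1) * (s + (i - s) + 1) * (s + (i - s) + 2) =
    ((2 * s - i) * (2 * s - i - 1)) * ((i + 1) * (i + 2)) by ring]
  exact Real.sqrt_mul_mul_sqrt_of_mul_eq (by nlinarith) (by positivity) hchoose

theorem sqrt_mul_sqrt_choose {s i : ℕ} (hi : i + 2 ≤ 2 * s) :
    √(((s : ℝ) - (i - s)) * (s - (i - s) - 1) * (s + (i - s) + 1) * (s + (i - s) + 2)) *
      √((2 * s).choose i) =
      √((2 * s).choose (i + 2)) * ((i + 1) * (i + 2)) := by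
  have hi' : (i : ℝ) + 2 ≤ 2 * s := by exact_mod_cast hi
  have hchoose := Nat.cast_choose_add_two_mul (R := ℝ) hi
  push_cast at hchoose
  rw [show ((s : ℝ) - (i - s)) * (s - (i - s) - 1) * (s + (i - s) + 1) * (s + (i - s) + 2) =
    ((i + 1) * (i + 2)) * ((2 * s - i) * (2 * s - i - 1)) by ring]
  exact Real.sqrt_mul_mul_sqrt_of_mul_eq (by positivity) (by nlinarith) hchoose.symm

theorem semiconjBy_topMatrix_Hmat (s : ℕ) :
    SemiconjBy (Matrix.diagonal fun i : Fin (2 * s + 1) => √((2 * s).choose i))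
      (topMatrix a1 a2 a3 s) (Hmat s a1 a2 a3) := by
  ext i j
  simp only [Matrix.mul_diagonal, Matrix.diagonal_mul, Hmat, topMatrix, Matrix.of_apply,
    Int.cast_natCast]
  by_cases hij : i = j
  · subst hij
    rw [if_pos rfl, sub_self, eval_topBand_diag]
    ring
  by_cases hup : (j : ℕ) = i + 2
  · rw [if_neg hij, if_pos hup, show ((j : ℕ) : ℤ) - (i : ℕ) = 2 by omega, eval_topBand_up,
      hup, mul_assoc _ (√_), sqrt_mul_sqrt_choose_add_two (by omega)]
    ring
  by_cases hdown : (i : ℕ) = j + 2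
  · rw [if_neg hij, if_neg hup, if_pos hdown, show ((j : ℕ) : ℤ) - (i : ℕ) = -2 by omega,
      eval_topBand_down, mul_assoc _ (√_), sqrt_mul_sqrt_choose (by omega), hdown]
    push_cast
    ring
  · rw [if_neg hij, if_neg hup, if_neg hdown, topBand_eq_zero]
    · simp
    · simp only [Finset.mem_insert, Finset.mem_singleton]
      omega

def topWalk (k : ℕ) : MvPolynomial (Fin 2) ℝ := bandWalk {-2, 0, 2} (topBand a1 a2 a3) k 0 0

theorem trace_Hmat_pow_eq_sum (s k : ℕ) :
    (Hmat s a1 a2 a3 ^ k).trace =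
      ∑ i ∈ Finset.range (2 * s + 1), eval ![(s : ℝ), (i : ℝ)] (topWalk a1 a2 a3 k) := by
  have hunit : IsUnit (Matrix.diagonal fun i : Fin (2 * s + 1) => √((2 * s).choose i)) := by
    refine Matrix.isUnit_diagonal.mpr (Pi.isUnit_iff.mpr fun i => (Real.sqrt_pos.mpr ?_).ne'.isUnit)
    exact_mod_cast Nat.choose_pos (by omega)
  have hsupp : ∀ b ∉ ({-2, 0, 2} : Finset ℤ),
      (fun t : ℤ => eval ![(s : ℝ), (t : ℝ)] (topBand a1 a2 a3 b 0)) = 0 := fun b hb =>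
    funext fun t => by simp [topBand_eq_zero a1 a2 a3 hb]
  have hescape : ∀ b ∈ ({-2, 0, 2} : Finset ℤ), ∀ t ∈ Set.Ico 0 ((2 * s + 1 : ℕ) : ℤ),
      t + b ∉ Set.Ico 0 ((2 * s + 1 : ℕ) : ℤ) →
        eval ![(s : ℝ), (t : ℝ)] (topBand a1 a2 a3 b 0) = 0 :=
    fun b _ t ht htb => eval_topBand_eq_zero_of_escape a1 a2 a3 s (by exact_mod_cast ht)
      (by exact_mod_cast htb)
  rw [← Matrix.trace_pow_eq_of_semiconjBy hunit (semiconjBy_topMatrix_Hmat a1 a2 a3 s) k,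
    Matrix.trace, ← Fin.sum_univ_eq_sum_range]
  refine Finset.sum_congr rfl fun i _ => ?_
  rw [Matrix.diag_apply, Matrix.pow_apply_eq_bandWalk (M := topMatrix a1 a2 a3 s) (fun _ _ => rfl)
    hsupp hescape, sub_self, topWalk, map_bandWalk (eval ![(s : ℝ), (i : ℝ)]) (i := i)
    (fun b e => ?_), add_zero]
  rw [eval_topBand_offset]
  push_cast
  rfl

theorem totalDegree_topWalk_le (k : ℕ) : (topWalk a1 a2 a3 k).totalDegree ≤ 2 * k :=
  totalDegree_bandWalk_le (fun b _ e => totalDegree_topBand_le a1 a2 a3 b e) k 0 0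

theorem eval_topWalk_succ_neg_one (k : ℕ) : eval ![-1, -1] (topWalk a1 a2 a3 (k + 1)) = 0 := by
  rw [topWalk, bandWalk, map_sum]
  refine Finset.sum_eq_zero fun b _ => ?_
  rw [map_mul, zero_add, zero_sub, eval_topBand_neg_one, mul_zero]

theorem Hmat_zero : Hmat 0 a1 a2 a3 = 0 := by
  ext i j
  obtain rfl : i = j := Fin.ext (by omega)
  simp [Hmat]

def tracePoly (k : ℕ) : Polynomial ℝ := sumBelow (2 * Polynomial.X + 1) (topWalk a1 a2 a3 k)

theorem trace_Hmat_pow_eq_eval_tracePoly (s k : ℕ) :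
    (Hmat s a1 a2 a3 ^ k).trace = (tracePoly a1 a2 a3 k).eval (s : ℝ) := by
  rw [trace_Hmat_pow_eq_sum, tracePoly, sumBelow_eval_of_eval_eq_natCast (n := 2 * s + 1) (by simp)]

theorem natDegree_tracePoly_le (k : ℕ) : (tracePoly a1 a2 a3 k).natDegree ≤ 2 * k + 1 :=
  (natDegree_sumBelow_le (by compute_degree) _).trans (by grw [totalDegree_topWalk_le])

theorem tracePoly_isRoot {k : ℕ} (hk : 1 ≤ k) :
    ∀ a ∈ ({0, -1, -1 / 2} : Finset ℝ), (tracePoly a1 a2 a3 k).IsRoot a := by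
  simp only [Finset.mem_insert, Finset.mem_singleton]
  rintro a (rfl | rfl | rfl)
  · simpa [Hmat_zero, zero_pow (by omega : k ≠ 0)] using
      (trace_Hmat_pow_eq_eval_tracePoly a1 a2 a3 0 k).symm
  · obtain ⟨k, rfl⟩ := Nat.exists_eq_add_of_le' hk
    rw [Polynomial.IsRoot, tracePoly, sumBelow_eval_of_eval_eq_neg_one (by norm_num),
      eval_topWalk_succ_neg_one, neg_zero]
  · exact sumBelow_eval_of_eval_eq_natCast (n := 0) (by norm_num) _

end EulerTop

end

/-- `tr(H_s^k)` is divisible by `s(s+1)(2s+1)` as a polynomial in `s`: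
there is a polynomial `P` of degree `≤ 2k-2` with
`tr(H_s^k) = s(s+1)(2s+1) · P(s)` for all nonnegative integers `s`. -/
theorem trace_Hmat_pow_divisible (k : ℕ) (hk : 1 ≤ k) (a1 a2 a3 : ℝ) :
    ∃ P : Polynomial ℝ, P.natDegree ≤ 2 * k - 2 ∧
      ∀ s : ℕ, Matrix.trace ((Hmat s a1 a2 a3) ^ k) =
        (s : ℝ) * ((s : ℝ) + 1) * (2 * (s : ℝ) + 1) * P.eval (s : ℝ) := by
  obtain ⟨q, hFq, hq⟩ := Polynomial.exists_eq_prod_X_sub_C_mul (tracePoly_isRoot a1 a2 a3 hk)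
  refine ⟨Polynomial.C 2⁻¹ * q, ?_, fun s => ?_⟩
  · have hF := natDegree_tracePoly_le a1 a2 a3 k
    have hcard : ({0, -1, -1 / 2} : Finset ℝ).card = 3 := by norm_num
    exact (Polynomial.natDegree_C_mul_le _ _).trans (by omega)
  · rw [trace_Hmat_pow_eq_eval_tracePoly, hFq, Polynomial.eval_mul, Polynomial.eval_prod,
      Finset.prod_insert (by norm_num), Finset.prod_insert (by norm_num), Finset.prod_singleton]
    simp only [Polynomial.eval_sub, Polynomial.eval_X, Polynomial.eval_C, Polynomial.eval_mul]
    ring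
end

section
/- Let s be a nonnegative integer and suppose a₁+a₂+a₃ = 0 (reduced case). The coefficient of λ^{2s-1} in the characteristic polynomial det(λI - H_s) = λ^{2s+1} + b₁λ^{2s} + b₂λ^{2s-1} + ... satisfies b₁ = 0 and b₂ = -(g₂/120)·s(s+1)(2s-1)(2s+1)(2s+3), where g₂ = -4(a₁a₂ + a₂a₃ + a₁a₃). -/
open Polynomial Finset Matrix

namespace Polynomial

theorem two_mul_coeff_prod_X_sub_C_card_sub_two {R ι : Type*} [CommRing R] [DecidableEq ι]
    (s : Finset ι) (f : ι → R) (hs : 2 ≤ #s) :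
    2 * (∏ i ∈ s, (X - C (f i))).coeff (#s - 2) =
      (∑ i ∈ s, f i) ^ 2 - ∑ i ∈ s, f i ^ 2 := by
  induction s using Finset.induction_on with
  | empty => simp at hs
  | @insert a t ha ih =>
    rw [card_insert_of_notMem ha] at hs ⊢
    rw [prod_insert ha, sum_insert ha, sum_insert ha, sub_mul, coeff_sub, coeff_C_mul]
    obtain ⟨b, rfl⟩ | ht := (show #t = 1 ∨ 2 ≤ #t by omega).imp_left card_eq_one.mp
    · simp only [card_singleton, prod_singleton, sum_singleton, Nat.sub_self, mul_coeff_zero,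
        coeff_X_zero, coeff_sub, coeff_C_zero]
      ring
    · obtain ⟨k, hk⟩ : ∃ k, #t = k + 2 := ⟨#t - 2, by omega⟩
      have hsq := ih ht
      have hsum := prod_X_sub_C_coeff_card_pred t f (by omega)
      rw [hk, Nat.add_sub_cancel] at hsq
      rw [hk, show k + 2 - 1 = k + 1 by omega] at hsum
      rw [hk, show k + 2 + 1 - 2 = k + 1 by omega, coeff_X_mul]
      linear_combination hsq - 2 * f a * hsum

end Polynomial

namespace Matrix.IsHermitian

variable {𝕜 n : Type*} [RCLike 𝕜] [Fintype n] [DecidableEq n] {A : Matrix n n 𝕜}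

theorem trace_mul_self_eq_sum_eigenvalues_sq (hA : A.IsHermitian) :
    (A * A).trace = ∑ i, (hA.eigenvalues i : 𝕜) ^ 2 := by
  conv_lhs => rw [hA.spectral_theorem, ← map_mul, Unitary.conjStarAlgAut_apply, trace_mul_cycle,
    Unitary.coe_star_mul_self, one_mul, diagonal_mul_diagonal, trace_diagonal]
  simp [sq]

theorem two_mul_charpoly_coeff_card_sub_two (hA : A.IsHermitian) (hn : 2 ≤ Fintype.card n) :
    2 * A.charpoly.coeff (Fintype.card n - 2) = A.trace ^ 2 - (A * A).trace := by
  rw [hA.charpoly_eq, hA.trace_eq_sum_eigenvalues, hA.trace_mul_self_eq_sum_eigenvalues_sq,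
    ← card_univ, two_mul_coeff_prod_X_sub_C_card_sub_two _ _ hn]

end Matrix.IsHermitian

theorem Finset.sum_range_quartic (n : ℕ) (c₀ c₁ c₂ c₃ c₄ : ℝ) :
    ∑ i ∈ range n, (c₀ + c₁ * i + c₂ * i ^ 2 + c₃ * i ^ 3 + c₄ * i ^ 4) =
      c₀ * n + c₁ * (n * (n - 1) / 2) + c₂ * (n * (n - 1) * (2 * n - 1) / 6) +
        c₃ * (n ^ 2 * (n - 1) ^ 2 / 4) +
        c₄ * (n * (n - 1) * (2 * n - 1) * (3 * n ^ 2 - 3 * n - 1) / 30) := by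
  induction n with
  | zero => simp
  | succ n ih =>
    rw [sum_range_succ, ih]
    push_cast
    ring

theorem Fin.sum_ite_val_eq {M : Type*} [AddCommMonoid M] (n m : ℕ) (x : M) :
    ∑ k : Fin n, (if (k : ℕ) = m then x else 0) = if m < n then x else 0 := by
  simp [Fin.sum_univ_eq_sum_range (fun k => if k = m then x else 0)]

theorem Finset.sum_range_ite_add_lt {M : Type*} [AddCommMonoid M] (n d : ℕ) (f : ℕ → M) :
    ∑ m ∈ range n, (if m + d < n then f m else 0) = ∑ m ∈ range (n - d), f m := by
  rw [← sum_filter]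
  congr 1
  ext m
  simp only [mem_filter, mem_range]
  omega

namespace Hmat

variable (s : ℕ) (a1 a2 a3 : ℝ)

noncomputable def diagEntry (m : ℕ) : ℝ :=
  (a1 + a2) / 2 * ((s : ℝ) * ((s : ℝ) + 1) - ((m : ℝ) - s) ^ 2) + a3 * ((m : ℝ) - s) ^ 2

noncomputable def offDiagEntry (m : ℕ) : ℝ :=
  (a1 - a2) / 4 * Real.sqrt (((s : ℝ) - ((m : ℝ) - s)) * ((s : ℝ) - ((m : ℝ) - s) - 1) *
    ((s : ℝ) + ((m : ℝ) - s) + 1) * ((s : ℝ) + ((m : ℝ) - s) + 2))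

theorem apply_eq (i k : Fin (2 * s + 1)) :
    Hmat s a1 a2 a3 i k =
      if i = k then diagEntry s a1 a2 a3 i
      else if (k : ℕ) = i + 2 then offDiagEntry s a1 a2 i
      else if (i : ℕ) = k + 2 then offDiagEntry s a1 a2 k
      else 0 := rfl

theorem isHermitian : (Hmat s a1 a2 a3).IsHermitian := by
  ext i k
  simp only [conjTranspose_apply, star_trivial, apply_eq]
  split_ifs <;> first | rfl | omega | simp_all

theorem trace_eq :
    (Hmat s a1 a2 a3).trace = ∑ m ∈ range (2 * s + 1), diagEntry s a1 a2 a3 m := by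
  simp only [Matrix.trace, Matrix.diag_apply, apply_eq, if_true]
  exact Fin.sum_univ_eq_sum_range (diagEntry s a1 a2 a3 ·) _

theorem mul_apply_swap_eq (i k : Fin (2 * s + 1)) :
    Hmat s a1 a2 a3 i k * Hmat s a1 a2 a3 k i =
      (if i = k then diagEntry s a1 a2 a3 i ^ 2 else 0) +
        (if (k : ℕ) = i + 2 then offDiagEntry s a1 a2 i ^ 2 else 0) +
        (if (i : ℕ) = k + 2 then offDiagEntry s a1 a2 k ^ 2 else 0) := by
  rcases eq_or_ne i k with rfl | hik
  · simp [apply_eq, sq]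
  · have hik' : (i : ℕ) ≠ k := Fin.val_ne_of_ne hik
    simp only [apply_eq, if_neg hik, if_neg hik.symm]
    split_ifs <;> first | omega | ring

theorem trace_mul_self_eq :
    (Hmat s a1 a2 a3 * Hmat s a1 a2 a3).trace =
      ∑ m ∈ range (2 * s + 1), diagEntry s a1 a2 a3 m ^ 2 +
        2 * ∑ m ∈ range (2 * s - 1), offDiagEntry s a1 a2 m ^ 2 := by
  have hoff : ∑ i : Fin (2 * s + 1),
      (if (i : ℕ) + 2 < 2 * s + 1 then offDiagEntry s a1 a2 i ^ 2 else 0) =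
        ∑ m ∈ range (2 * s - 1), offDiagEntry s a1 a2 m ^ 2 := by
    rw [Fin.sum_univ_eq_sum_range
        (fun m => if m + 2 < 2 * s + 1 then offDiagEntry s a1 a2 m ^ 2 else 0),
      sum_range_ite_add_lt, show 2 * s + 1 - 2 = 2 * s - 1 by omega]
  simp only [Matrix.trace, Matrix.diag_apply, mul_apply, mul_apply_swap_eq, sum_add_distrib,
    sum_ite_eq, mem_univ, Fin.sum_ite_val_eq]
  rw [sum_comm]
  simp only [if_true, Fin.sum_ite_val_eq, hoff,
    Fin.sum_univ_eq_sum_range (diagEntry s a1 a2 a3 · ^ 2)]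
  ring

variable {s : ℕ} {a1 a2 a3 : ℝ}

theorem sum_diagEntry (h : a1 + a2 + a3 = 0) :
    ∑ m ∈ range (2 * s + 1), diagEntry s a1 a2 a3 m = 0 := by
  have hquartic : ∀ m : ℕ, diagEntry s a1 a2 a3 m =
      (a1 + a2) / 2 * (s - 2 * s ^ 2) + 3 * (a1 + a2) * s * m + -(3 * (a1 + a2) / 2) * m ^ 2 +
        0 * m ^ 3 + 0 * m ^ 4 := by
    intro m
    rw [diagEntry, show a3 = -a1 - a2 by linarith]
    ring
  simp only [hquartic, sum_range_quartic]
  push_cast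
  ring

theorem sum_diagEntry_sq (h : a1 + a2 + a3 = 0) :
    ∑ m ∈ range (2 * s + 1), diagEntry s a1 a2 a3 m ^ 2 =
      (a1 + a2) ^ 2 / 20 * (s * (s + 1) * (2 * s - 1) * (2 * s + 1) * (2 * s + 3)) := by
  have hquartic : ∀ m : ℕ, diagEntry s a1 a2 a3 m ^ 2 =
      (a1 + a2) ^ 2 / 4 * (s ^ 2 - 4 * s ^ 3 + 4 * s ^ 4) +
        (a1 + a2) ^ 2 / 4 * (12 * s ^ 2 - 24 * s ^ 3) * m +
        (a1 + a2) ^ 2 / 4 * (-6 * s + 48 * s ^ 2) * m ^ 2 +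
        (a1 + a2) ^ 2 / 4 * (-36 * s) * m ^ 3 + (a1 + a2) ^ 2 / 4 * 9 * m ^ 4 := by
    intro m
    rw [diagEntry, show a3 = -a1 - a2 by linarith]
    ring
  simp only [hquartic, sum_range_quartic]
  push_cast
  ring

theorem offDiagEntry_sq {m : ℕ} (hm : m + 2 ≤ 2 * s) :
    offDiagEntry s a1 a2 m ^ 2 =
      ((a1 - a2) / 4) ^ 2 * ((2 * s - m) * (2 * s - m - 1) * (m + 1) * (m + 2)) := by
  have hm' : (m : ℝ) + 2 ≤ 2 * s := by exact_mod_cast hm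
  rw [offDiagEntry, mul_pow, Real.sq_sqrt (by
    apply_rules [mul_nonneg] <;> linarith [(m.cast_nonneg : (0 : ℝ) ≤ m)])]
  ring

theorem sum_offDiagEntry_sq :
    ∑ m ∈ range (2 * s - 1), offDiagEntry s a1 a2 m ^ 2 =
      (a1 - a2) ^ 2 / 120 * (s * (s + 1) * (2 * s - 1) * (2 * s + 1) * (2 * s + 3)) := by
  obtain rfl | hs := Nat.eq_zero_or_pos s
  · simp
  have hquartic : ∀ m ∈ range (2 * s - 1), offDiagEntry s a1 a2 m ^ 2 =
      ((a1 - a2) / 4) ^ 2 * (8 * s ^ 2 - 4 * s) +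
        ((a1 - a2) / 4) ^ 2 * (12 * s ^ 2 - 14 * s + 2) * m +
        ((a1 - a2) / 4) ^ 2 * (4 * s ^ 2 - 14 * s + 5) * m ^ 2 +
        ((a1 - a2) / 4) ^ 2 * (4 - 4 * s) * m ^ 3 + ((a1 - a2) / 4) ^ 2 * 1 * m ^ 4 := by
    intro m hm
    rw [offDiagEntry_sq (by rw [mem_range] at hm; omega)]
    ring
  rw [sum_congr rfl hquartic, sum_range_quartic, Nat.cast_sub (by omega)]
  push_cast
  ring

end Hmat

/-- Reduced case `a1+a2+a3 = 0`: the coefficients `b₁, b₂` of the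
characteristic polynomial of `H_s`. Here `b₁ = coeff (2s)` and `b₂ = coeff (2s-1)`. -/
theorem charpoly_coeffs_reduced (s : ℕ) (a1 a2 a3 : ℝ) (h : a1 + a2 + a3 = 0) :
    (Hmat s a1 a2 a3).charpoly.coeff (2 * s) = 0 ∧
    (Hmat s a1 a2 a3).charpoly.coeff (2 * s - 1) =
      -((-4 * (a1 * a2 + a2 * a3 + a1 * a3)) / 120) * (s : ℝ) * ((s : ℝ) + 1) *
        (2 * (s : ℝ) - 1) * (2 * (s : ℝ) + 1) * (2 * (s : ℝ) + 3) := by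
  have htrace : (Hmat s a1 a2 a3).trace = 0 := by
    rw [Hmat.trace_eq, Hmat.sum_diagEntry h]
  have hb₁ : (Hmat s a1 a2 a3).charpoly.coeff (2 * s) = 0 := by
    simpa [htrace] using (Hmat s a1 a2 a3).trace_eq_neg_charpoly_coeff
  refine ⟨hb₁, ?_⟩
  obtain rfl | hs := Nat.eq_zero_or_pos s
  -- for `s = 0` the truncated index `2 * s - 1` is `2 * s` again
  · simpa using hb₁
  have hb₂ := (Hmat.isHermitian s a1 a2 a3).two_mul_charpoly_coeff_card_sub_two
    (by rw [Fintype.card_fin]; omega)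
  rw [Fintype.card_fin, show 2 * s + 1 - 2 = 2 * s - 1 by omega, htrace, Hmat.trace_mul_self_eq,
    Hmat.sum_diagEntry_sq h, Hmat.sum_offDiagEntry_sq] at hb₂
  obtain rfl : a3 = -a1 - a2 := by linarith
  linear_combination hb₂ / 2
end

section
/- Let s be a nonnegative integer with a₁+a₂+a₃ = 0. Then tr(H_s³) = (g₃/280)·s(s+1)(2s-3)(2s-1)(2s+1)(2s+3)(2s+5), where g₃ = 4a₁a₂a₃. In particular, in the lemniscatic case g₃ = 0 (i.e. one of a₁,a₂,a₃ zero and the sum zero) we have tr(H_s³) = 0. -/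
namespace TraceCubeAux
open Matrix

/-- diagonal entry as a function of the natural index -/
noncomputable def dd (s : ℕ) (a1 a2 a3 : ℝ) (i : ℕ) : ℝ :=
  (a1 + a2) / 2 * ((s : ℝ) * ((s : ℝ) + 1) - ((i : ℝ) - (s : ℝ)) ^ 2) +
    a3 * ((i : ℝ) - (s : ℝ)) ^ 2

/-- off-diagonal entry as a function of the (row) natural index -/
noncomputable def uu (s : ℕ) (a1 a2 : ℝ) (i : ℕ) : ℝ :=
  (a1 - a2) / 4 *
    Real.sqrt ((2 * (s : ℝ) - (i : ℝ)) * (2 * (s : ℝ) - (i : ℝ) - 1) * ((i : ℝ) + 1) *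
      ((i : ℝ) + 2))

noncomputable def Dm (s : ℕ) (a1 a2 a3 : ℝ) : Matrix (Fin (2 * s + 1)) (Fin (2 * s + 1)) ℝ :=
  Matrix.diagonal fun i => dd s a1 a2 a3 (i : ℕ)

noncomputable def Um (s : ℕ) (a1 a2 : ℝ) : Matrix (Fin (2 * s + 1)) (Fin (2 * s + 1)) ℝ :=
  Matrix.of fun i k => if (k : ℕ) = (i : ℕ) + 2 then uu s a1 a2 (i : ℕ) else 0

lemma decomp (s : ℕ) (a1 a2 a3 : ℝ) :
    Hmat s a1 a2 a3 = Dm s a1 a2 a3 + Um s a1 a2 + (Um s a1 a2)ᵀ := by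
  ext i k
  simp only [Hmat, Dm, Um, Matrix.add_apply, Matrix.transpose_apply, Matrix.of_apply,
    Matrix.diagonal_apply]
  by_cases hik : i = k
  · subst hik
    have h1 : ¬ ((i : ℕ) = (i : ℕ) + 2) := by omega
    simp [h1, dd]
  · have hik' : ¬ ((i : ℕ) = (k : ℕ)) := fun hc => hik (Fin.ext hc)
    by_cases h2 : (k : ℕ) = (i : ℕ) + 2
    · have h3 : ¬ ((i : ℕ) = (k : ℕ) + 2) := by omega
      simp only [if_neg hik, if_pos h2, if_neg h3, add_zero, zero_add]
      rw [uu]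
      congr 1
      ring
    · by_cases h3 : (i : ℕ) = (k : ℕ) + 2
      · simp only [if_neg hik, if_neg h2, if_pos h3, zero_add, add_zero]
        congr 1
        push_cast
        ring
      · simp [hik, h2, h3]

/-- support of a matrix on the diagonal with offset `m` -/
def SuppZ {n : ℕ} (m : ℤ) (M : Matrix (Fin n) (Fin n) ℝ) : Prop :=
  ∀ i k : Fin n, ((k : ℕ) : ℤ) ≠ ((i : ℕ) : ℤ) + m → M i k = 0

lemma suppZ_mul {n : ℕ} {m m' : ℤ} {M N : Matrix (Fin n) (Fin n) ℝ}
    (hM : SuppZ m M) (hN : SuppZ m' N) : SuppZ (m + m') (M * N) := by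
  intro i k h
  rw [Matrix.mul_apply]
  apply Finset.sum_eq_zero
  intro l _
  by_cases hl : ((l : ℕ) : ℤ) = ((i : ℕ) : ℤ) + m
  · rw [hN l k (by omega), mul_zero]
  · rw [hM i l hl, zero_mul]

lemma trace_suppZ {n : ℕ} {m : ℤ} (hm : m ≠ 0) {M : Matrix (Fin n) (Fin n) ℝ}
    (hM : SuppZ m M) : Matrix.trace M = 0 := by
  rw [Matrix.trace]
  apply Finset.sum_eq_zero
  intro i _
  exact hM i i (by omega)

lemma suppD (s : ℕ) (a1 a2 a3 : ℝ) : SuppZ 0 (Dm s a1 a2 a3) := by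
  intro i k hk
  apply Matrix.diagonal_apply_ne
  intro hc; subst hc; omega

lemma suppU (s : ℕ) (a1 a2 : ℝ) : SuppZ 2 (Um s a1 a2) := by
  intro i k hk
  simp only [Um, Matrix.of_apply]
  rw [if_neg]
  omega

lemma suppL (s : ℕ) (a1 a2 : ℝ) : SuppZ (-2) (Um s a1 a2)ᵀ := by
  intro i k hk
  simp only [Matrix.transpose_apply, Um, Matrix.of_apply]
  rw [if_neg]
  omega

lemma sum_fin_ite (n c : ℕ) (f : ℕ → ℝ) :
    (∑ l : Fin n, if (l : ℕ) = c then f (l : ℕ) else 0) = if c < n then f c else 0 := by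
  rw [Fin.sum_univ_eq_sum_range (fun l => if l = c then f l else 0) n,
    Finset.sum_ite_eq' (Finset.range n) c f]
  simp [Finset.mem_range]

lemma uu_zero (s : ℕ) (a1 a2 : ℝ) {i : ℕ} (hi : i ≤ 2 * s) (h2 : 2 * s + 1 ≤ i + 2) :
    uu s a1 a2 i = 0 := by
  have harg : (2 * (s : ℝ) - (i : ℝ)) * (2 * (s : ℝ) - (i : ℝ) - 1) * ((i : ℝ) + 1) *
      ((i : ℝ) + 2) = 0 := by
    rcases (by omega : i = 2 * s ∨ i + 1 = 2 * s) with h | h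
    · have : (i : ℝ) = 2 * (s : ℝ) := by exact_mod_cast congrArg (Nat.cast (R := ℝ)) h
      rw [this]; ring
    · have h0 : 2 * (s : ℝ) - (i : ℝ) - 1 = 0 := by
        have : (i : ℝ) + 1 = 2 * (s : ℝ) := by exact_mod_cast congrArg (Nat.cast (R := ℝ)) h
        linarith
      rw [h0]; ring
  rw [uu, harg, Real.sqrt_zero, mul_zero]

lemma uu_sq (s : ℕ) (a1 a2 : ℝ) {i : ℕ} (hi : i ≤ 2 * s) :
    uu s a1 a2 i ^ 2 = ((a1 - a2) / 4) ^ 2 *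
      ((2 * (s : ℝ) - (i : ℝ)) * (2 * (s : ℝ) - (i : ℝ) - 1) * ((i : ℝ) + 1) * ((i : ℝ) + 2)) := by
  have harg : 0 ≤ (2 * (s : ℝ) - (i : ℝ)) * (2 * (s : ℝ) - (i : ℝ) - 1) * ((i : ℝ) + 1) *
      ((i : ℝ) + 2) := by
    rcases (by omega : i = 2 * s ∨ i + 1 ≤ 2 * s) with h | h
    · have : (i : ℝ) = 2 * (s : ℝ) := by exact_mod_cast congrArg (Nat.cast (R := ℝ)) h
      rw [this]; nlinarith []
    · have h1 : (i : ℝ) + 1 ≤ 2 * (s : ℝ) := by exact_mod_cast h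
      have h0 : (0:ℝ) ≤ (i : ℝ) := Nat.cast_nonneg i
      apply mul_nonneg
      apply mul_nonneg
      apply mul_nonneg <;> nlinarith
      all_goals nlinarith
  rw [uu, mul_pow, Real.sq_sqrt harg]


lemma traceDDD (s : ℕ) (a1 a2 a3 : ℝ) :
    Matrix.trace (Dm s a1 a2 a3 * Dm s a1 a2 a3 * Dm s a1 a2 a3) =
      ∑ i ∈ Finset.range (2 * s + 1), dd s a1 a2 a3 i ^ 3 := by
  rw [Dm, Matrix.diagonal_mul_diagonal, Matrix.diagonal_mul_diagonal, Matrix.trace_diagonal]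
  rw [Fin.sum_univ_eq_sum_range
    (fun m => dd s a1 a2 a3 m * dd s a1 a2 a3 m * dd s a1 a2 a3 m) (2 * s + 1)]
  exact Finset.sum_congr rfl (fun i _ => by ring)

lemma traceDUL (s : ℕ) (a1 a2 a3 : ℝ) :
    Matrix.trace (Dm s a1 a2 a3 * Um s a1 a2 * (Um s a1 a2)ᵀ) =
      ∑ i ∈ Finset.range (2 * s + 1), dd s a1 a2 a3 i * uu s a1 a2 i ^ 2 := by
  have hdiag : ∀ i : Fin (2 * s + 1),
      (Dm s a1 a2 a3 * Um s a1 a2 * (Um s a1 a2)ᵀ) i i =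
        if (i : ℕ) + 2 < 2 * s + 1 then dd s a1 a2 a3 (i : ℕ) * uu s a1 a2 (i : ℕ) ^ 2
        else 0 := by
    intro i
    rw [Matrix.mul_apply,
      ← sum_fin_ite (2 * s + 1) ((i : ℕ) + 2)
        (fun _ => dd s a1 a2 a3 (i : ℕ) * uu s a1 a2 (i : ℕ) ^ 2)]
    apply Finset.sum_congr rfl
    intro l _
    rw [show (Dm s a1 a2 a3 * Um s a1 a2) i l = dd s a1 a2 a3 (i : ℕ) * Um s a1 a2 i l from
      Matrix.diagonal_mul _ _ i l]
    simp only [Matrix.transpose_apply, Um, Matrix.of_apply]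
    split_ifs <;> ring
  have : Matrix.trace (Dm s a1 a2 a3 * Um s a1 a2 * (Um s a1 a2)ᵀ) =
      ∑ i : Fin (2 * s + 1),
        (if (i : ℕ) + 2 < 2 * s + 1 then dd s a1 a2 a3 (i : ℕ) * uu s a1 a2 (i : ℕ) ^ 2
         else 0) := by
    rw [Matrix.trace]
    exact Finset.sum_congr rfl (fun i _ => hdiag i)
  rw [this, Fin.sum_univ_eq_sum_range
    (fun m => if m + 2 < 2 * s + 1 then dd s a1 a2 a3 m * uu s a1 a2 m ^ 2 else 0) (2 * s + 1)]
  apply Finset.sum_congr rfl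
  intro i hi
  simp only [Finset.mem_range] at hi
  by_cases hc : i + 2 < 2 * s + 1
  · rw [if_pos hc]
  · rw [if_neg hc, uu_zero s a1 a2 (by omega) (by omega)]
    ring

lemma traceDLU (s : ℕ) (a1 a2 a3 : ℝ) :
    Matrix.trace (Dm s a1 a2 a3 * (Um s a1 a2)ᵀ * Um s a1 a2) =
      ∑ i ∈ Finset.range (2 * s + 1), dd s a1 a2 a3 (i + 2) * uu s a1 a2 i ^ 2 := by
  have step1 : Matrix.trace (Dm s a1 a2 a3 * (Um s a1 a2)ᵀ * Um s a1 a2) =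
      ∑ l : Fin (2 * s + 1), ∑ i : Fin (2 * s + 1),
        (dd s a1 a2 a3 (i : ℕ) * (Um s a1 a2)ᵀ i l) * Um s a1 a2 l i := by
    rw [Matrix.trace]
    have hdiag : ∀ i : Fin (2 * s + 1),
        (Dm s a1 a2 a3 * (Um s a1 a2)ᵀ * Um s a1 a2).diag i =
          ∑ l : Fin (2 * s + 1),
            (dd s a1 a2 a3 (i : ℕ) * (Um s a1 a2)ᵀ i l) * Um s a1 a2 l i := by
      intro i
      rw [Matrix.diag_apply, Matrix.mul_apply]
      apply Finset.sum_congr rfl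
      intro l _
      rw [show (Dm s a1 a2 a3 * (Um s a1 a2)ᵀ) i l =
        dd s a1 a2 a3 (i : ℕ) * (Um s a1 a2)ᵀ i l from Matrix.diagonal_mul _ _ i l]
    rw [Finset.sum_congr rfl (fun i _ => hdiag i)]
    exact Finset.sum_comm
  rw [step1]
  have hl : ∀ l : Fin (2 * s + 1),
      (∑ i : Fin (2 * s + 1), (dd s a1 a2 a3 (i : ℕ) * (Um s a1 a2)ᵀ i l) * Um s a1 a2 l i) =
        if (l : ℕ) + 2 < 2 * s + 1 then
          dd s a1 a2 a3 ((l : ℕ) + 2) * uu s a1 a2 (l : ℕ) ^ 2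
        else 0 := by
    intro l
    rw [← sum_fin_ite (2 * s + 1) ((l : ℕ) + 2)
      (fun m => dd s a1 a2 a3 m * uu s a1 a2 (l : ℕ) ^ 2)]
    apply Finset.sum_congr rfl
    intro i _
    simp only [Matrix.transpose_apply, Um, Matrix.of_apply]
    split_ifs <;> ring
  rw [Finset.sum_congr rfl (fun l _ => hl l),
    Fin.sum_univ_eq_sum_range
      (fun m => if m + 2 < 2 * s + 1 then dd s a1 a2 a3 (m + 2) * uu s a1 a2 m ^ 2 else 0)
      (2 * s + 1)]
  apply Finset.sum_congr rfl
  intro i hi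
  simp only [Finset.mem_range] at hi
  by_cases hc : i + 2 < 2 * s + 1
  · rw [if_pos hc]
  · rw [if_neg hc, uu_zero s a1 a2 (by omega) (by omega)]
    ring

/-- explicit antidifference polynomial -/
noncomputable def GG (x t A B : ℝ) : ℝ :=
  (9/112) * A * B^2 * x
    + (9/32) * A * B^2 * x^2
    + (9/32) * A * B^2 * x^3
    + (-9/32) * A * B^2 * x^5
    + (-9/32) * A * B^2 * x^6
    + (-9/112) * A * B^2 * x^7
    + (-9/112) * A^3 * x
    + (9/16) * A^3 * x^3
    + (-27/16) * A^3 * x^5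
    + (27/16) * A^3 * x^6
    + (-27/56) * A^3 * x^7
    + (-9/20) * t * A * B^2 * x
    + (-3/8) * t * A * B^2 * x^2
    + (3/4) * t * A * B^2 * x^3
    + (33/16) * t * A * B^2 * x^4
    + (39/20) * t * A * B^2 * x^5
    + (9/16) * t * A * B^2 * x^6
    + (-9/80) * t * A^3 * x
    + (-27/16) * t * A^3 * x^2
    + (9/8) * t * A^3 * x^3
    + (27/4) * t * A^3 * x^4
    + (-189/20) * t * A^3 * x^5
    + (27/8) * t * A^3 * x^6
    + (-7/10) * t^2 * A * B^2 * x
    + (-9/4) * t^2 * A * B^2 * x^2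
    + (-5) * t^2 * A * B^2 * x^3
    + (-39/8) * t^2 * A * B^2 * x^4
    + (-57/40) * t^2 * A * B^2 * x^5
    + (111/80) * t^2 * A^3 * x
    + (-45/16) * t^2 * A^3 * x^2
    + (-75/8) * t^2 * A^3 * x^3
    + (81/4) * t^2 * A^3 * x^4
    + (-189/20) * t^2 * A^3 * x^5
    + 1 * t^3 * A * B^2 * x
    + (9/2) * t^3 * A * B^2 * x^2
    + 5 * t^3 * A * B^2 * x^3
    + (3/2) * t^3 * A * B^2 * x^4
    + 2 * t^3 * A^3 * x
    + (45/8) * t^3 * A^3 * x^2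
    + (-21) * t^3 * A^3 * x^3
    + (27/2) * t^3 * A^3 * x^4
    + (-1) * t^4 * A * B^2 * x
    + (-3/2) * t^4 * A * B^2 * x^2
    + (-1/2) * t^4 * A * B^2 * x^3
    + (-3/2) * t^4 * A^3 * x
    + (45/4) * t^4 * A^3 * x^2
    + (-21/2) * t^4 * A^3 * x^3
    + (-3) * t^5 * A^3 * x
    + (9/2) * t^5 * A^3 * x^2
    + (-1) * t^6 * A^3 * x

/-- the polynomial summand -/
noncomputable def FF (t A B : ℝ) (i : ℕ) : ℝ :=
  (A * (t * (t + 1) / 2 - 3 / 2 * ((i : ℝ) - t) ^ 2)) ^ 3 +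
    3 * ((B / 4) ^ 2 *
        ((2 * t - (i : ℝ)) * (2 * t - (i : ℝ) - 1) * ((i : ℝ) + 1) * ((i : ℝ) + 2))) *
      (A * (t * (t + 1) - 3 / 2 * (((i : ℝ) - t) ^ 2 + ((i : ℝ) + 2 - t) ^ 2)))

lemma key (t A B : ℝ) : ∀ n : ℕ, ∑ i ∈ Finset.range n, FF t A B i = GG n t A B := by
  intro n
  induction n with
  | zero => norm_num [GG]
  | succ n ih =>
    rw [Finset.sum_range_succ, ih, FF, GG, GG]
    push_cast
    ring

lemma trace_eq (s : ℕ) (a1 a2 : ℝ) :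
    Matrix.trace ((Hmat s a1 a2 (-a1 - a2)) ^ 3) =
      (4 * (a1 * a2 * (-a1 - a2))) / 280 * (s : ℝ) * ((s : ℝ) + 1) * (2 * (s : ℝ) - 3) *
        (2 * (s : ℝ) - 1) * (2 * (s : ℝ) + 1) * (2 * (s : ℝ) + 3) * (2 * (s : ℝ) + 5) := by
  have sD := suppD s a1 a2 (-a1 - a2)
  have sU := suppU s a1 a2
  have sL := suppL s a1 a2
  have hz : ∀ (m1 m2 m3 : ℤ) (M1 M2 M3 : Matrix (Fin (2 * s + 1)) (Fin (2 * s + 1)) ℝ),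
      SuppZ m1 M1 → SuppZ m2 M2 → SuppZ m3 M3 → m1 + m2 + m3 ≠ 0 →
      Matrix.trace (M1 * M2 * M3) = 0 := by
    intro m1 m2 m3 M1 M2 M3 h1 h2 h3 hm
    exact trace_suppZ hm (suppZ_mul (suppZ_mul h1 h2) h3)
  have hmain : Matrix.trace ((Hmat s a1 a2 (-a1 - a2)) ^ 3) =
      ∑ i ∈ Finset.range (2 * s + 1), FF (s : ℝ) (a1 + a2) (a1 - a2) i := by
    rw [decomp s a1 a2 (-a1 - a2), pow_three']
    simp only [add_mul, mul_add]
    simp only [Matrix.trace_add]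
    rw [show Matrix.trace (Um s a1 a2 * Dm s a1 a2 (-a1 - a2) * (Um s a1 a2)ᵀ) = Matrix.trace (Dm s a1 a2 (-a1 - a2) * (Um s a1 a2)ᵀ * Um s a1 a2) from by
        rw [Matrix.trace_mul_cycle (Um s a1 a2) (Dm s a1 a2 (-a1 - a2)) ((Um s a1 a2)ᵀ),
          Matrix.trace_mul_cycle ((Um s a1 a2)ᵀ) (Um s a1 a2) (Dm s a1 a2 (-a1 - a2))],
      show Matrix.trace (Um s a1 a2 * (Um s a1 a2)ᵀ * Dm s a1 a2 (-a1 - a2)) = Matrix.trace (Dm s a1 a2 (-a1 - a2) * Um s a1 a2 * (Um s a1 a2)ᵀ) from by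
        rw [Matrix.trace_mul_cycle (Um s a1 a2) ((Um s a1 a2)ᵀ) (Dm s a1 a2 (-a1 - a2))],
      show Matrix.trace ((Um s a1 a2)ᵀ * Dm s a1 a2 (-a1 - a2) * Um s a1 a2) = Matrix.trace (Dm s a1 a2 (-a1 - a2) * Um s a1 a2 * (Um s a1 a2)ᵀ) from by
        rw [Matrix.trace_mul_cycle ((Um s a1 a2)ᵀ) (Dm s a1 a2 (-a1 - a2)) (Um s a1 a2),
          Matrix.trace_mul_cycle (Um s a1 a2) ((Um s a1 a2)ᵀ) (Dm s a1 a2 (-a1 - a2))],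
      show Matrix.trace ((Um s a1 a2)ᵀ * Um s a1 a2 * Dm s a1 a2 (-a1 - a2)) = Matrix.trace (Dm s a1 a2 (-a1 - a2) * (Um s a1 a2)ᵀ * Um s a1 a2) from by
        rw [Matrix.trace_mul_cycle ((Um s a1 a2)ᵀ) (Um s a1 a2) (Dm s a1 a2 (-a1 - a2))]]
    simp only [
      hz 0 0 2 (Dm s a1 a2 (-a1 - a2)) (Dm s a1 a2 (-a1 - a2)) (Um s a1 a2) sD sD sU (by norm_num),
      hz 0 0 (-2) (Dm s a1 a2 (-a1 - a2)) (Dm s a1 a2 (-a1 - a2)) ((Um s a1 a2)ᵀ) sD sD sL (by norm_num),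
      hz 0 2 0 (Dm s a1 a2 (-a1 - a2)) (Um s a1 a2) (Dm s a1 a2 (-a1 - a2)) sD sU sD (by norm_num),
      hz 0 2 2 (Dm s a1 a2 (-a1 - a2)) (Um s a1 a2) (Um s a1 a2) sD sU sU (by norm_num),
      hz 0 (-2) 0 (Dm s a1 a2 (-a1 - a2)) ((Um s a1 a2)ᵀ) (Dm s a1 a2 (-a1 - a2)) sD sL sD (by norm_num),
      hz 0 (-2) (-2) (Dm s a1 a2 (-a1 - a2)) ((Um s a1 a2)ᵀ) ((Um s a1 a2)ᵀ) sD sL sL (by norm_num),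
      hz 2 0 0 (Um s a1 a2) (Dm s a1 a2 (-a1 - a2)) (Dm s a1 a2 (-a1 - a2)) sU sD sD (by norm_num),
      hz 2 0 2 (Um s a1 a2) (Dm s a1 a2 (-a1 - a2)) (Um s a1 a2) sU sD sU (by norm_num),
      hz 2 2 0 (Um s a1 a2) (Um s a1 a2) (Dm s a1 a2 (-a1 - a2)) sU sU sD (by norm_num),
      hz 2 2 2 (Um s a1 a2) (Um s a1 a2) (Um s a1 a2) sU sU sU (by norm_num),
      hz 2 2 (-2) (Um s a1 a2) (Um s a1 a2) ((Um s a1 a2)ᵀ) sU sU sL (by norm_num),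
      hz 2 (-2) 2 (Um s a1 a2) ((Um s a1 a2)ᵀ) (Um s a1 a2) sU sL sU (by norm_num),
      hz 2 (-2) (-2) (Um s a1 a2) ((Um s a1 a2)ᵀ) ((Um s a1 a2)ᵀ) sU sL sL (by norm_num),
      hz (-2) 0 0 ((Um s a1 a2)ᵀ) (Dm s a1 a2 (-a1 - a2)) (Dm s a1 a2 (-a1 - a2)) sL sD sD (by norm_num),
      hz (-2) 0 (-2) ((Um s a1 a2)ᵀ) (Dm s a1 a2 (-a1 - a2)) ((Um s a1 a2)ᵀ) sL sD sL (by norm_num),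
      hz (-2) 2 2 ((Um s a1 a2)ᵀ) (Um s a1 a2) (Um s a1 a2) sL sU sU (by norm_num),
      hz (-2) 2 (-2) ((Um s a1 a2)ᵀ) (Um s a1 a2) ((Um s a1 a2)ᵀ) sL sU sL (by norm_num),
      hz (-2) (-2) 0 ((Um s a1 a2)ᵀ) ((Um s a1 a2)ᵀ) (Dm s a1 a2 (-a1 - a2)) sL sL sD (by norm_num),
      hz (-2) (-2) 2 ((Um s a1 a2)ᵀ) ((Um s a1 a2)ᵀ) (Um s a1 a2) sL sL sU (by norm_num),
      hz (-2) (-2) (-2) ((Um s a1 a2)ᵀ) ((Um s a1 a2)ᵀ) ((Um s a1 a2)ᵀ) sL sL sL (by norm_num),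
      traceDDD s a1 a2 (-a1 - a2), traceDUL s a1 a2 (-a1 - a2), traceDLU s a1 a2 (-a1 - a2),
      add_zero, zero_add]
    simp only [← Finset.sum_add_distrib]
    apply Finset.sum_congr rfl
    intro i hi
    simp only [Finset.mem_range] at hi
    rw [uu_sq s a1 a2 (by omega : i ≤ 2 * s)]
    simp only [dd, FF]
    push_cast
    ring
  rw [hmain, key (s : ℝ) (a1 + a2) (a1 - a2) (2 * s + 1), GG]
  push_cast
  ring

end TraceCubeAux

/-- Reduced case: `tr(H_s³) = (g₃/280) s(s+1)(2s-3)(2s-1)(2s+1)(2s+3)(2s+5)`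
with `g₃ = 4a₁a₂a₃`; in particular it vanishes in the lemniscatic case `g₃ = 0`. -/
theorem trace_Hmat_cube_reduced (s : ℕ) (a1 a2 a3 : ℝ) (h : a1 + a2 + a3 = 0) :
    Matrix.trace ((Hmat s a1 a2 a3) ^ 3) =
      (4 * (a1 * a2 * a3)) / 280 * (s : ℝ) * ((s : ℝ) + 1) * (2 * (s : ℝ) - 3) *
        (2 * (s : ℝ) - 1) * (2 * (s : ℝ) + 1) * (2 * (s : ℝ) + 3) * (2 * (s : ℝ) + 5) ∧
    (a1 * a2 * a3 = 0 → Matrix.trace ((Hmat s a1 a2 a3) ^ 3) = 0) := by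
  have ha3 : a3 = -a1 - a2 := by linarith
  subst ha3
  refine ⟨TraceCubeAux.trace_eq s a1 a2, fun h0 => ?_⟩
  rw [TraceCubeAux.trace_eq s a1 a2, h0]
  norm_num
end
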